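/- arXiv:2312.06752 — 8 statements merged into one kernel-verified Lean document; each statement's English description precedes it below -/
import Mathlib

section
/- Let x and y be complex d×d matrices with y skew-Hermitian. Then exp(t • y) * x * (exp(t • y))ᴴ = x holds for every real t if and only if y * x = x * y. (This is the matrix form of the lemma that the commutant of a connected represented symmetry group coincides with the commutant of its represented Lie algebra.) -/
/-!
Differentiating `t ↦ exp (t • y) * x * exp (-(t • y))` at `0` gives `y * x - x * y`, so a constant
conjugation orbit forces `y` and `x` to commute; conversely, if they commute then `exp (t • y)`
commutes with `x`. For skew-Hermitian `y`, `(exp (t • y))ᴴ = exp (-(t • y))`.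
-/

open Matrix NormedSpace

section ExpConjugation

variable {𝕂 𝔸 : Type*} [RCLike 𝕂] [NormedRing 𝔸] [NormedAlgebra 𝕂 𝔸] [CompleteSpace 𝔸]

theorem hasDerivAt_exp_smul_mul_mul_exp_neg_smul (x y : 𝔸) :
    HasDerivAt (fun t : 𝕂 => exp (t • y) * x * exp (-(t • y))) (y * x - x * y) 0 := by
  have hexp := ((hasDerivAt_exp_smul_const' (𝕂 := 𝕂) y 0).mul_const x).mul
    (hasDerivAt_exp_smul_const' (𝕂 := 𝕂) (-y) 0)
  simp only [zero_smul, neg_zero, exp_zero, mul_one, one_mul, mul_neg, smul_neg,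
    ← sub_eq_add_neg] at hexp
  exact hexp

theorem forall_exp_smul_mul_mul_exp_neg_smul_eq_iff_commute (x y : 𝔸) :
    (∀ t : 𝕂, exp (t • y) * x * exp (-(t • y)) = x) ↔ Commute y x := by
  let +nondep : NormedAlgebra ℚ 𝔸 := .restrictScalars ℚ 𝕂 𝔸
  refine ⟨fun h => ?_, fun h t => ?_⟩
  · have hconst : HasDerivAt (fun t : 𝕂 => exp (t • y) * x * exp (-(t • y))) 0 0 := by
      simpa only [h] using hasDerivAt_const (0 : 𝕂) x
    exact sub_eq_zero.mp ((hasDerivAt_exp_smul_mul_mul_exp_neg_smul x y).unique hconst)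
  · simpa using ((h.smul_left t).neg_left.symm : SemiconjBy x _ _).exp_neg_mul_mul_exp_eq_self

end ExpConjugation

theorem skewHermitian_exp_conj_eq_iff_commute_general (d : ℕ)
    (x y : Matrix (Fin d) (Fin d) ℂ) (hy : yᴴ = -y) :
    (∀ t : ℝ, NormedSpace.exp (t • y) * x * (NormedSpace.exp (t • y))ᴴ = x) ↔
      y * x = x * y := by
  have hconj (t : ℝ) : (exp (t • y))ᴴ = exp (-(t • y)) := by
    rw [← exp_conjTranspose, conjTranspose_smul, hy, star_trivial, smul_neg]
  -- any Banach-algebra norm will do; it only serves to differentiate `exp`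
  let : NormedRing (Matrix (Fin d) (Fin d) ℂ) := Matrix.linftyOpNormedRing
  let : NormedAlgebra ℝ (Matrix (Fin d) (Fin d) ℂ) := Matrix.linftyOpNormedAlgebra
  simp only [hconj]
  exact forall_exp_smul_mul_mul_exp_neg_smul_eq_iff_commute x y

/-- For complex `d × d` matrices `x` and `y` with `y` skew-Hermitian,
`exp (t • y) * x * (exp (t • y))ᴴ = x` for all real `t` iff `y * x = x * y`. -/
theorem skewHermitian_exp_conj_eq_iff_commute (d : ℕ) (hd : 1 ≤ d)
    (x y : Matrix (Fin d) (Fin d) ℂ) (hy : yᴴ = -y) :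
    (∀ t : ℝ, NormedSpace.exp (t • y) * x * (NormedSpace.exp (t • y))ᴴ = x) ↔
      y * x = x * y :=
  skewHermitian_exp_conj_eq_iff_commute_general d x y hy
end

section
/- Let x be a complex d×d matrix and s a unitary d×d matrix. Then s * exp(t • x) * sᴴ = exp(t • x) holds for every real t if and only if s * x = x * s. (This is the matrix form of the lemma that the Lie algebra of the commutant group equals the commutant algebra: x generates a one-parameter group commuting with s precisely when x itself commutes with s.) -/
open Matrix

/-! If `s` commutes with every `exp (t • x)`, differentiating `s * exp (t • x) = exp (t • x) * s`
at `t = 0` gives `s * x = x * s`; conversely, an element commuting with `x` commutes with every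
power series in `x`. Since a one-sided inverse of a square matrix is two-sided, `sᴴ` inverts `s`,
which turns the conjugation identity `s * e * sᴴ = e` into commutation with `e`. -/

theorem Units.mul_mul_inv_eq_iff_commute {M : Type*} [Monoid M] (u : Mˣ) (a : M) :
    u * a * ↑u⁻¹ = a ↔ Commute (u : M) a :=
  Units.mul_inv_eq_iff_eq_mul u

section ExpSmul

variable {𝕂 𝔸 : Type*} [RCLike 𝕂] [NormedRing 𝔸] [NormedAlgebra 𝕂 𝔸] [CompleteSpace 𝔸]

theorem Commute.of_forall_exp_smul {s x : 𝔸}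
    (h : ∀ t : 𝕂, Commute s (NormedSpace.exp (t • x))) : Commute s x := by
  have hleft : HasDerivAt (fun t : 𝕂 => s * NormedSpace.exp (t • x)) (s * x) 0 := by
    simpa using (hasDerivAt_exp_smul_const x (0 : 𝕂)).const_mul s
  have hright : HasDerivAt (fun t : 𝕂 => NormedSpace.exp (t • x) * s) (x * s) 0 := by
    simpa using (hasDerivAt_exp_smul_const x (0 : 𝕂)).mul_const s
  exact hleft.unique (by simpa only [(h _).eq] using hright)

theorem commute_iff_forall_commute_exp_smul (s x : 𝔸) :
    (∀ t : 𝕂, Commute s (NormedSpace.exp (t • x))) ↔ Commute s x :=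
  ⟨Commute.of_forall_exp_smul, fun h t => (h.smul_right t).exp_right⟩

end ExpSmul

open scoped Matrix.Norms.Operator in
theorem unitary_conj_exp_eq_iff_commute_general (d : ℕ)
    (x s : Matrix (Fin d) (Fin d) ℂ) (hs : sᴴ * s = 1) :
    (∀ t : ℝ, s * NormedSpace.exp (t • x) * sᴴ = NormedSpace.exp (t • x)) ↔
      s * x = x * s := by
  let u : (Matrix (Fin d) (Fin d) ℂ)ˣ := ⟨s, sᴴ, mul_eq_one_comm.mp hs, hs⟩
  simp_rw [show s * _ * sᴴ = u * _ * ↑u⁻¹ from rfl, Units.mul_mul_inv_eq_iff_commute]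
  exact commute_iff_forall_commute_exp_smul s x

/-- For a complex `d × d` matrix `x` and a unitary `s`,
`s * exp (t • x) * sᴴ = exp (t • x)` for all real `t` iff `s * x = x * s`. -/
theorem unitary_conj_exp_eq_iff_commute (d : ℕ) (hd : 1 ≤ d)
    (x s : Matrix (Fin d) (Fin d) ℂ) (hs : sᴴ * s = 1) :
    (∀ t : ℝ, s * NormedSpace.exp (t • x) * sᴴ = NormedSpace.exp (t • x)) ↔
      s * x = x * s :=
  unitary_conj_exp_eq_iff_commute_general d x s hs
end

section
/- Let 𝔱₀ be a real Lie subalgebra of skew-Hermitian complex d×d matrices that is perfect, i.e., 𝔱₀ is spanned (over ℝ) by the commutators ⁅x₁, x₂⁆ of its own elements. If y is any complex d×d matrix commuting with every element of 𝔱₀, then tr(xᴴ * y) = 0 for every x ∈ 𝔱₀. (This is the key step in proving that the centerless part 𝔱₀ of a compactly represented symmetry algebra is trace-orthogonal to the centerless part of the commutant algebra.) -/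
open Matrix

/-- If `𝔱₀` is a perfect real Lie subalgebra of skew-Hermitian complex
`d × d` matrices (spanned by commutators of its own elements) and `y` commutes with every
element of `𝔱₀`, then every `x ∈ 𝔱₀` is trace-orthogonal to `y`. -/
theorem perfect_skewHermitian_trace_orthogonal_commutant (d : ℕ) (hd : 1 ≤ d)
    (𝔱₀ : Submodule ℝ (Matrix (Fin d) (Fin d) ℂ))
    (hskew : ∀ x ∈ 𝔱₀, xᴴ = -x)
    (hclosed : ∀ x ∈ 𝔱₀, ∀ y ∈ 𝔱₀, x * y - y * x ∈ 𝔱₀)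
    (hperfect : 𝔱₀ ≤ Submodule.span ℝ
      {m : Matrix (Fin d) (Fin d) ℂ | ∃ x₁ ∈ 𝔱₀, ∃ x₂ ∈ 𝔱₀, m = x₁ * x₂ - x₂ * x₁})
    (y : Matrix (Fin d) (Fin d) ℂ)
    (hy : ∀ z ∈ 𝔱₀, z * y = y * z) :
    ∀ x ∈ 𝔱₀, (xᴴ * y).trace = 0 := by
  have key : ∀ m ∈ Submodule.span ℝ
      {m : Matrix (Fin d) (Fin d) ℂ | ∃ x₁ ∈ 𝔱₀, ∃ x₂ ∈ 𝔱₀, m = x₁ * x₂ - x₂ * x₁},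
      (mᴴ * y).trace = 0 := by
    intro m hm
    induction hm using Submodule.span_induction with
    | mem m hm =>
      obtain ⟨x₁, h₁, x₂, h₂, rfl⟩ := hm
      have e : (x₁ * x₂ - x₂ * x₁)ᴴ = x₂ * x₁ - x₁ * x₂ := by
        simp [conjTranspose_sub, conjTranspose_mul, hskew x₁ h₁, hskew x₂ h₂]
      rw [e, sub_mul, trace_sub]
      have : x₂ * x₁ * y = x₂ * y * x₁ := by rw [mul_assoc, hy x₁ h₁, mul_assoc]
      rw [this, trace_mul_cycle, sub_self]
    | zero => simp
    | add a b _ _ ha hb => rw [conjTranspose_add, add_mul, trace_add, ha, hb, add_zero]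
    | smul r a _ ha =>
      rw [conjTranspose_smul, Matrix.smul_mul, trace_smul, ha, smul_zero]
  intro x hx
  exact key x (hperfect hx)
end

section
/- The twirl is idempotent: for every complex d×d matrix x, T(T(x)) = T(x). -/
/-!
Conjugating the twirl by `σ s` and pulling the conjugation inside the integral turns the
integrand into `u ↦ σ (s * u) * x * (σ (s * u))ᴴ`, whose integral is again the twirl by left
invariance of Haar measure. So `T x` is fixed by every conjugation `σ s * · * (σ s)ᴴ`, and
twirling it averages a constant against a probability measure.
-/

open Matrix MeasureTheory

attribute [local instance] Matrix.normedAddCommGroup Matrix.normedSpace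

namespace Matrix

variable {n 𝕜 α : Type*} [Fintype n] [RCLike 𝕜]
  [TopologicalSpace α] [MeasurableSpace α] [OpensMeasurableSpace α] [CompactSpace α]

-- Stated for continuous `f` because `Integrable f μ` cannot be written here: the topology of
-- the local normed-group instance is not reducibly the product topology on `Matrix n n 𝕜`.
theorem mul_integral_mul (μ : Measure α) [IsFiniteMeasure μ] {f : α → Matrix n n 𝕜}
    (hf : Continuous f) (A B : Matrix n n 𝕜) :
    A * (∫ a, f a ∂μ) * B = ∫ a, A * f a * B ∂μ :=
  let L : Matrix n n 𝕜 →L[𝕜] Matrix n n 𝕜 :=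
    LinearMap.toContinuousLinearMap ((LinearMap.mulRight 𝕜 B).comp (LinearMap.mulLeft 𝕜 A))
  (L.integral_comp_comm (hf.integrable_of_hasCompactSupport (.of_compactSpace f))).symm

end Matrix

section Twirl

variable {n 𝕜 G : Type*} [Fintype n] [RCLike 𝕜]
  [Group G] [TopologicalSpace G] [MeasurableSpace G]

noncomputable def twirl (μ : Measure G) (σ : G → Matrix n n 𝕜) (x : Matrix n n 𝕜) :
    Matrix n n 𝕜 :=
  ∫ s, σ s * x * (σ s)ᴴ ∂μ

theorem conj_twirl [IsTopologicalGroup G] [BorelSpace G] [CompactSpace G]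
    (μ : Measure G) [IsFiniteMeasure μ] [μ.IsMulLeftInvariant]
    {σ : G → Matrix n n 𝕜} (hσ : Continuous σ) (hmul : ∀ s t, σ (s * t) = σ s * σ t)
    (x : Matrix n n 𝕜) (s : G) : σ s * twirl μ σ x * (σ s)ᴴ = twirl μ σ x :=
  calc σ s * twirl μ σ x * (σ s)ᴴ
      = ∫ u, σ s * (σ u * x * (σ u)ᴴ) * (σ s)ᴴ ∂μ :=
        mul_integral_mul μ
          ((hσ.matrix_mul continuous_const).matrix_mul hσ.matrix_conjTranspose) _ _
    _ = ∫ u, σ (s * u) * x * (σ (s * u))ᴴ ∂μ := by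
        simp only [hmul, conjTranspose_mul, Matrix.mul_assoc]
    _ = twirl μ σ x := integral_mul_left_eq_self (fun u => σ u * x * (σ u)ᴴ) s

end Twirl

theorem twirl_idempotent_general (d : ℕ)
    {G : Type*} [Group G] [TopologicalSpace G] [IsTopologicalGroup G] [CompactSpace G]
    [MeasurableSpace G] [BorelSpace G]
    (μ : Measure G) [μ.IsHaarMeasure] [IsProbabilityMeasure μ]
    (σ : G → Matrix (Fin d) (Fin d) ℂ) (hcont : Continuous σ)
    (hmul : ∀ s t : G, σ (s * t) = σ s * σ t)
    (x : Matrix (Fin d) (Fin d) ℂ) :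
    (∫ s, σ s * (∫ u, σ u * x * (σ u)ᴴ ∂μ) * (σ s)ᴴ ∂μ) = ∫ s, σ s * x * (σ s)ᴴ ∂μ :=
  calc twirl μ σ (twirl μ σ x)
      = ∫ _s, twirl μ σ x ∂μ := integral_congr_ae (ae_of_all _ (conj_twirl μ hcont hmul x))
    _ = twirl μ σ x := by simp

/-- The twirl `T x = ∫ s, σ s * x * (σ s)ᴴ ∂μ` with respect to the Haar
probability measure of a compact group is idempotent: `T (T x) = T x`. -/
theorem twirl_idempotent (d : ℕ) (hd : 1 ≤ d)
    {G : Type*} [Group G] [TopologicalSpace G] [IsTopologicalGroup G] [CompactSpace G]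
    [MeasurableSpace G] [BorelSpace G]
    (μ : Measure G) [μ.IsHaarMeasure] [IsProbabilityMeasure μ]
    (σ : G → Matrix (Fin d) (Fin d) ℂ) (hcont : Continuous σ)
    (hunitary : ∀ s : G, (σ s)ᴴ * σ s = 1)
    (hmul : ∀ s t : G, σ (s * t) = σ s * σ t)
    (x : Matrix (Fin d) (Fin d) ℂ) :
    (∫ s, σ s * (∫ u, σ u * x * (σ u)ᴴ ∂μ) * (σ s)ᴴ ∂μ) = ∫ s, σ s * x * (σ s)ᴴ ∂μ :=
  twirl_idempotent_general d μ σ hcont hmul x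
end

section
/- A complex d×d matrix x is a fixed point of the twirl if and only if it lies in the commutant of the represented group: T(x) = x holds if and only if σ(s) * x = x * σ(s) for all s ∈ G. Consequently the range of T is exactly the commutant {x | σ(s) * x = x * σ(s) for all s ∈ G}. -/
/-!
Left invariance of the Haar measure makes every orbit average `∫ s, ρ s x ∂μ` invariant under
each `ρ t`, while an invariant vector is its own average since `μ` is a probability measure.
Hence the fixed points and the range of the averaging map are both the invariant vectors. For
conjugation by a unitary `u`, invariance `u * x * uᴴ = x` is commutation `u * x = x * u`.
-/

open Matrix MeasureTheory

attribute [local instance] Matrix.normedAddCommGroup Matrix.normedSpace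

section OrbitAverage

variable {𝕜 G E : Type*} [RCLike 𝕜] [NormedAddCommGroup E] [NormedSpace ℝ E]
  [NormedSpace 𝕜 E] [CompleteSpace E] [MeasurableSpace G] {μ : Measure G}
  {ρ : G → E →L[𝕜] E}

variable (μ ρ) in
/-- With `ρ s = conjCLM (σ s)` this is the twirl `T`. -/
noncomputable def orbitAverage (x : E) : E :=
  ∫ s, ρ s x ∂μ

theorem orbitAverage_of_forall_apply_eq [IsProbabilityMeasure μ] {x : E}
    (hx : ∀ s, ρ s x = x) : orbitAverage μ ρ x = x := by
  simp [orbitAverage, hx]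

variable [Group G] [MeasurableMul G] [μ.IsMulLeftInvariant]

theorem apply_orbitAverage (hρ : ∀ s t x, ρ (s * t) x = ρ s (ρ t x)) {x : E}
    (hx : Integrable (fun s => ρ s x) μ) (t : G) :
    ρ t (orbitAverage μ ρ x) = orbitAverage μ ρ x := by
  rw [orbitAverage, ← (ρ t).integral_comp_comm hx]
  simp_rw [← hρ]
  exact integral_mul_left_eq_self (fun s => ρ s x) t

theorem orbitAverage_eq_self_iff [IsProbabilityMeasure μ]
    (hρ : ∀ s t x, ρ (s * t) x = ρ s (ρ t x)) {x : E} (hx : Integrable (fun s => ρ s x) μ) :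
    orbitAverage μ ρ x = x ↔ ∀ s, ρ s x = x :=
  ⟨fun h s => h ▸ apply_orbitAverage hρ hx s, orbitAverage_of_forall_apply_eq⟩

theorem range_orbitAverage [IsProbabilityMeasure μ] (hρ : ∀ s t x, ρ (s * t) x = ρ s (ρ t x))
    (hint : ∀ x, Integrable (fun s => ρ s x) μ) :
    Set.range (orbitAverage μ ρ) = {x | ∀ s, ρ s x = x} := by
  ext x
  refine ⟨?_, fun hx => ⟨x, orbitAverage_of_forall_apply_eq hx⟩⟩
  rintro ⟨y, rfl⟩
  exact apply_orbitAverage hρ (hint y)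

end OrbitAverage

theorem Unitary.mul_mul_star_eq_self_iff {R : Type*} [Monoid R] [StarMul R] {u : R}
    (hu : u ∈ unitary R) {x : R} : u * x * star u = x ↔ u * x = x * u := by
  constructor
  · intro h
    calc u * x = u * x * (star u * u) := by rw [Unitary.star_mul_self_of_mem hu, mul_one]
      _ = x * u := by rw [← mul_assoc, h]
  · intro h
    rw [h, mul_assoc, Unitary.mul_star_self_of_mem hu, mul_one]

namespace Matrix

variable {n 𝕜 : Type*} [Fintype n] [DecidableEq n] [RCLike 𝕜]

noncomputable def conjCLM (u : Matrix n n 𝕜) : Matrix n n 𝕜 →L[𝕜] Matrix n n 𝕜 :=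
  (LinearMap.mulLeftRight 𝕜 (u, uᴴ)).toContinuousLinearMap

@[simp]
theorem conjCLM_apply (u x : Matrix n n 𝕜) : conjCLM u x = u * x * uᴴ := rfl

theorem conjCLM_mul_apply (u v x : Matrix n n 𝕜) :
    conjCLM (u * v) x = conjCLM u (conjCLM v x) := by
  simp only [conjCLM_apply, conjTranspose_mul, Matrix.mul_assoc]

end Matrix

theorem twirl_fixed_iff_commutant_and_range_general (d : ℕ)
    {G : Type*} [Group G] [TopologicalSpace G] [IsTopologicalGroup G] [CompactSpace G]
    [MeasurableSpace G] [BorelSpace G]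
    (μ : Measure G) [μ.IsHaarMeasure] [IsProbabilityMeasure μ]
    (σ : G → Matrix (Fin d) (Fin d) ℂ) (hcont : Continuous σ)
    (hunitary : ∀ s : G, (σ s)ᴴ * σ s = 1)
    (hmul : ∀ s t : G, σ (s * t) = σ s * σ t) :
    (∀ x : Matrix (Fin d) (Fin d) ℂ,
      (∫ s, σ s * x * (σ s)ᴴ ∂μ) = x ↔ ∀ s : G, σ s * x = x * σ s) ∧
    Set.range (fun x : Matrix (Fin d) (Fin d) ℂ => ∫ s, σ s * x * (σ s)ᴴ ∂μ) =
      {x : Matrix (Fin d) (Fin d) ℂ | ∀ s : G, σ s * x = x * σ s} := by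
  set ρ : G → Matrix (Fin d) (Fin d) ℂ →L[ℂ] Matrix (Fin d) (Fin d) ℂ :=
    fun s => conjCLM (σ s)
  have hρ : ∀ s t x, ρ (s * t) x = ρ s (ρ t x) := fun s t x => by
    simp only [ρ, hmul, conjCLM_mul_apply]
  have hcont_conj : ∀ x, Continuous fun s => ρ s x := fun x =>
    (hcont.matrix_mul continuous_const).matrix_mul hcont.matrix_conjTranspose
  have hint := fun x =>
    (hcont_conj x).integrable_of_hasCompactSupport (μ := μ) (.of_compactSpace _)
  have hfixed : ∀ x, (∀ s, ρ s x = x) ↔ ∀ s, σ s * x = x * σ s := fun x =>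
    forall_congr' fun s =>
      Unitary.mul_mul_star_eq_self_iff (mem_unitaryGroup_iff'.mpr (hunitary s))
  exact ⟨fun x => (orbitAverage_eq_self_iff hρ (hint x)).trans (hfixed x),
    (range_orbitAverage hρ hint).trans (Set.ext hfixed)⟩

/-- A matrix `x` is a fixed point of the twirl
`T x = ∫ s, σ s * x * (σ s)ᴴ ∂μ` iff it commutes with `σ s` for every `s ∈ G`;
consequently the range of `T` is exactly the commutant of the represented group. -/
theorem twirl_fixed_iff_commutant_and_range (d : ℕ) (hd : 1 ≤ d)
    {G : Type*} [Group G] [TopologicalSpace G] [IsTopologicalGroup G] [CompactSpace G]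
    [MeasurableSpace G] [BorelSpace G]
    (μ : Measure G) [μ.IsHaarMeasure] [IsProbabilityMeasure μ]
    (σ : G → Matrix (Fin d) (Fin d) ℂ) (hcont : Continuous σ)
    (hunitary : ∀ s : G, (σ s)ᴴ * σ s = 1)
    (hmul : ∀ s t : G, σ (s * t) = σ s * σ t) :
    (∀ x : Matrix (Fin d) (Fin d) ℂ,
      (∫ s, σ s * x * (σ s)ᴴ ∂μ) = x ↔ ∀ s : G, σ s * x = x * σ s) ∧
    Set.range (fun x : Matrix (Fin d) (Fin d) ℂ => ∫ s, σ s * x * (σ s)ᴴ ∂μ) =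
      {x : Matrix (Fin d) (Fin d) ℂ | ∀ s : G, σ s * x = x * σ s} :=
  twirl_fixed_iff_commutant_and_range_general d μ σ hcont hunitary hmul
end

section
/- The twirl is the orthogonal projection onto the commutant with respect to the trace inner product: for every complex d×d matrix x and every matrix y in the commutant (i.e., σ(s) * y = y * σ(s) for all s ∈ G), one has tr(yᴴ * (x - T(x))) = 0; equivalently, tr(yᴴ * T(x)) = tr(yᴴ * x) for all such y. -/
/-!
Conjugating by a unitary `u` that commutes with `y` leaves the functional `z ↦ tr (yᴴ * z)`
unchanged, since `uᴴ` then commutes with `yᴴ` and the trace is cyclic. So this continuous linear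
functional is constant, equal to `tr (yᴴ * x)`, on the integrand of the twirl, and it commutes with
the integral; as `μ` has mass one, it takes the same value on the twirl.
-/

open Matrix MeasureTheory

attribute [local instance] Matrix.normedAddCommGroup Matrix.normedSpace

theorem ContinuousLinearMap.map_integral_of_forall_map_eq {α 𝕜 E F : Type*} [MeasurableSpace α]
    {μ : Measure α} [IsProbabilityMeasure μ] [RCLike 𝕜] [NormedAddCommGroup E] [NormedSpace 𝕜 E]
    [NormedSpace ℝ E] [CompleteSpace E] [NormedAddCommGroup F] [NormedSpace 𝕜 F] [NormedSpace ℝ F]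
    [CompleteSpace F] (L : E →L[𝕜] F) {f : α → E} (hf : Integrable f μ) {c : F}
    (hc : ∀ s, L (f s) = c) :
    L (∫ s, f s ∂μ) = c := by
  rw [← L.integral_comp_comm hf]
  simp only [hc, integral_const, probReal_univ, one_smul]

theorem Matrix.trace_conjTranspose_mul_conj_eq_of_commute {n R : Type*} [Fintype n]
    [DecidableEq n] [CommRing R] [StarRing R] {u x y : Matrix n n R} (hu : uᴴ * u = 1)
    (huy : u * y = y * u) :
    (yᴴ * (u * x * uᴴ)).trace = (yᴴ * x).trace := by
  have huy' : uᴴ * yᴴ = yᴴ * uᴴ := by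
    rw [← conjTranspose_mul, ← huy, conjTranspose_mul]
  calc (yᴴ * (u * x * uᴴ)).trace
      = (uᴴ * (yᴴ * (u * x))).trace := by
        rw [← Matrix.mul_assoc, trace_mul_comm]
    _ = (yᴴ * x).trace := by
        rw [← Matrix.mul_assoc, huy', Matrix.mul_assoc, ← Matrix.mul_assoc uᴴ, hu,
          Matrix.one_mul]

theorem twirl_orthogonal_projection_general (d : ℕ)
    {G : Type*} [TopologicalSpace G] [CompactSpace G]
    [MeasurableSpace G] [BorelSpace G]
    (μ : Measure G) [IsProbabilityMeasure μ]
    (σ : G → Matrix (Fin d) (Fin d) ℂ) (hcont : Continuous σ)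
    (hunitary : ∀ s : G, (σ s)ᴴ * σ s = 1)
    (x y : Matrix (Fin d) (Fin d) ℂ)
    (hy : ∀ s : G, σ s * y = y * σ s) :
    (yᴴ * (x - ∫ s, σ s * x * (σ s)ᴴ ∂μ)).trace = 0 := by
  have hcont_conj : Continuous fun s ↦ σ s * x * (σ s)ᴴ :=
    (hcont.mul continuous_const).mul hcont.matrix_conjTranspose
  let L : Matrix (Fin d) (Fin d) ℂ →L[ℂ] ℂ :=
    LinearMap.toContinuousLinearMap ((traceLinearMap _ ℂ ℂ).comp (LinearMap.mulLeft ℂ yᴴ))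
  have htwirl : (yᴴ * ∫ s, σ s * x * (σ s)ᴴ ∂μ).trace = (yᴴ * x).trace :=
    L.map_integral_of_forall_map_eq
      (hcont_conj.integrable_of_hasCompactSupport (.of_compactSpace _)) fun s ↦
      trace_conjTranspose_mul_conj_eq_of_commute (hunitary s) (hy s)
  rw [Matrix.mul_sub, trace_sub, htwirl, sub_self]

/-- The twirl `T x = ∫ s, σ s * x * (σ s)ᴴ ∂μ` is the orthogonal
projection onto the commutant for the trace inner product: for every matrix `x` and
every `y` in the commutant, `tr (yᴴ * (x - T x)) = 0`. -/
theorem twirl_orthogonal_projection (d : ℕ) (hd : 1 ≤ d)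
    {G : Type*} [Group G] [TopologicalSpace G] [IsTopologicalGroup G] [CompactSpace G]
    [MeasurableSpace G] [BorelSpace G]
    (μ : Measure G) [μ.IsHaarMeasure] [IsProbabilityMeasure μ]
    (σ : G → Matrix (Fin d) (Fin d) ℂ) (hcont : Continuous σ)
    (hunitary : ∀ s : G, (σ s)ᴴ * σ s = 1)
    (hmul : ∀ s t : G, σ (s * t) = σ s * σ t)
    (x y : Matrix (Fin d) (Fin d) ℂ)
    (hy : ∀ s : G, σ s * y = y * σ s) :
    (yᴴ * (x - ∫ s, σ s * x * (σ s)ᴴ ∂μ)).trace = 0 :=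
  twirl_orthogonal_projection_general d μ σ hcont hunitary x y hy
end

section
/- Four-subspace decomposition of the unitary algebra. Let 𝔲(d) be the real Lie algebra of skew-Hermitian complex d×d matrices and let 𝔱 ⊆ 𝔲(d) be a real Lie subalgebra. Define: the center 𝔷(𝔱) = {x ∈ 𝔱 | ⁅x, y⁆ = 0 for all y ∈ 𝔱}; the centerless part 𝔱₀ = the trace-orthogonal complement of 𝔷(𝔱) within 𝔱; the commutant 𝔲^𝔱 = {x ∈ 𝔲(d) | ⁅x, y⁆ = 0 for all y ∈ 𝔱}; 𝔲^𝔱₀ = the trace-orthogonal complement of 𝔷(𝔱) within 𝔲^𝔱; and 𝔯 = the trace-orthogonal complement of 𝔲^𝔱 + 𝔱 within 𝔲(d). Assume 𝔱₀ is spanned by commutators of its own elements (𝔱₀ = ⁅𝔱₀, 𝔱₀⁆, which holds when 𝔱 is the Lie algebra of a compact group). Then the four real subspaces 𝔯, 𝔲^𝔱₀, 𝔷(𝔱), 𝔱₀ are pairwise trace-orthogonal, 𝔲(d) is their internal direct sum, and each of 𝔷(𝔱), 𝔱₀, 𝔲^𝔱₀ is closed under the commutator (a Lie subalgebra of 𝔲(d)).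 -/
/-! On `𝔲(d)` the trace form `tr (xᴴ * y)` is real, so trace-orthogonality there is orthogonality
for the real inner product `Re tr (xᴴ * y)` on all complex matrices. Orthogonal complements then
give `𝔱 = 𝔷 ⊕ 𝔱₀`, `𝔲^𝔱 = 𝔷 ⊕ 𝔲^𝔱₀` and `𝔲(d) = (𝔲^𝔱 + 𝔱) ⊕ 𝔯`, and all orthogonality relations
are automatic except `𝔲^𝔱₀ ⟂ 𝔱₀`. That one comes from `tr (z * (a * b - b * a)) = 0` whenever
`z` commutes with `a`: the commutant is orthogonal to every commutator of `𝔱`, and these span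
`𝔱₀`. The same identity shows that brackets in `𝔱` and in `𝔲^𝔱` are orthogonal to the center. -/

noncomputable section

open Matrix

/-- The real vector space `𝔲(d)` of skew-Hermitian complex `d × d` matrices. -/
def unitaryAlgebra (d : ℕ) : Submodule ℝ (Matrix (Fin d) (Fin d) ℂ) where
  carrier := {x | xᴴ = -x}
  add_mem' := by
    intro a b ha hb
    simp only [Set.mem_setOf_eq] at *
    rw [conjTranspose_add, ha, hb, neg_add]
  zero_mem' := by simp
  smul_mem' := by
    intro r a ha
    simp only [Set.mem_setOf_eq] at *
    rw [conjTranspose_smul, ha, star_trivial, smul_neg]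

/-- The center `𝔷(𝔱)` of a real subspace `𝔱` of matrices: the elements of `𝔱`
commuting with every element of `𝔱`. -/
def centerOf {d : ℕ} (𝔱 : Submodule ℝ (Matrix (Fin d) (Fin d) ℂ)) :
    Submodule ℝ (Matrix (Fin d) (Fin d) ℂ) where
  carrier := {x | x ∈ 𝔱 ∧ ∀ y ∈ 𝔱, x * y = y * x}
  add_mem' := by
    rintro a b ⟨ha, ha'⟩ ⟨hb, hb'⟩
    exact ⟨𝔱.add_mem ha hb, fun y hy => by rw [add_mul, mul_add, ha' y hy, hb' y hy]⟩
  zero_mem' := ⟨𝔱.zero_mem, fun y _ => by rw [zero_mul, mul_zero]⟩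
  smul_mem' := by
    rintro r a ⟨ha, ha'⟩
    exact ⟨𝔱.smul_mem r ha, fun y hy => by
      rw [Matrix.smul_mul, ha' y hy, Matrix.mul_smul]⟩

/-- The commutant `𝔲^𝔱` of `𝔱` in `𝔲(d)`: the skew-Hermitian matrices commuting
with every element of `𝔱`. -/
def commutantIn (d : ℕ) (𝔱 : Submodule ℝ (Matrix (Fin d) (Fin d) ℂ)) :
    Submodule ℝ (Matrix (Fin d) (Fin d) ℂ) where
  carrier := {x | x ∈ unitaryAlgebra d ∧ ∀ y ∈ 𝔱, x * y = y * x}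
  add_mem' := by
    rintro a b ⟨ha, ha'⟩ ⟨hb, hb'⟩
    exact ⟨(unitaryAlgebra d).add_mem ha hb,
      fun y hy => by rw [add_mul, mul_add, ha' y hy, hb' y hy]⟩
  zero_mem' := ⟨(unitaryAlgebra d).zero_mem, fun y _ => by rw [zero_mul, mul_zero]⟩
  smul_mem' := by
    rintro r a ⟨ha, ha'⟩
    exact ⟨(unitaryAlgebra d).smul_mem r ha, fun y hy => by
      rw [Matrix.smul_mul, ha' y hy, Matrix.mul_smul]⟩

/-- The trace-orthogonal complement of `V` within `W`:
`{x ∈ W | tr (zᴴ * x) = 0 for all z ∈ V}`. -/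
def traceOrthCompl {d : ℕ} (V W : Submodule ℝ (Matrix (Fin d) (Fin d) ℂ)) :
    Submodule ℝ (Matrix (Fin d) (Fin d) ℂ) where
  carrier := {x | x ∈ W ∧ ∀ z ∈ V, (zᴴ * x).trace = 0}
  add_mem' := by
    rintro a b ⟨ha, ha'⟩ ⟨hb, hb'⟩
    exact ⟨W.add_mem ha hb, fun z hz => by
      rw [mul_add, trace_add, ha' z hz, hb' z hz, add_zero]⟩
  zero_mem' := ⟨W.zero_mem, fun z _ => by rw [mul_zero, trace_zero]⟩
  smul_mem' := by
    rintro r a ⟨ha, ha'⟩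
    exact ⟨W.smul_mem r ha, fun z hz => by
      rw [Matrix.mul_smul, trace_smul, ha' z hz, smul_zero]⟩


open scoped ComplexOrder

namespace Matrix

theorem trace_mul_commutator_eq_zero {R n : Type*} [CommRing R] [Fintype n]
    {z a : Matrix n n R} (h : Commute z a) (b : Matrix n n R) :
    (z * (a * b - b * a)).trace = 0 := by
  rw [mul_sub, trace_sub, ← mul_assoc, h.eq, mul_assoc, trace_mul_comm a, mul_assoc, sub_self]

variable {m n : Type*} [Fintype m] [Fintype n]

theorem re_trace_conjTranspose_mul_comm (x y : Matrix m n ℂ) :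
    (xᴴ * y).trace.re = (yᴴ * x).trace.re := by
  rw [← Complex.conj_re, ← Complex.star_def, ← trace_conjTranspose, conjTranspose_mul,
    conjTranspose_conjTranspose]

abbrev frobeniusRealInnerCore : InnerProductSpace.Core ℝ (Matrix m n ℂ) where
  inner x y := (xᴴ * y).trace.re
  conj_inner_symm x y := re_trace_conjTranspose_mul_comm y x
  re_inner_nonneg x := (Complex.nonneg_iff.1 (posSemidef_conjTranspose_mul_self x).trace_nonneg).1
  definite x hx := by
    have hnonneg := Complex.nonneg_iff.1 (posSemidef_conjTranspose_mul_self x).trace_nonneg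
    exact trace_conjTranspose_mul_self_eq_zero_iff.1 (Complex.ext hx hnonneg.2.symm)
  add_left x y z := by simp [Matrix.add_mul]
  smul_left x y r := by simp

/-- Not a global instance: its uniformity is not defeq to the product uniformity of `Matrix`. -/
abbrev frobeniusRealNormedAddCommGroup : NormedAddCommGroup (Matrix m n ℂ) :=
  frobeniusRealInnerCore.toNormedAddCommGroup

attribute [local instance] frobeniusRealNormedAddCommGroup

abbrev frobeniusRealInnerProductSpace : InnerProductSpace ℝ (Matrix m n ℂ) :=
  .ofCore frobeniusRealInnerCore.toCore

end Matrix

attribute [local instance] Matrix.frobeniusRealNormedAddCommGroup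
  Matrix.frobeniusRealInnerProductSpace

namespace Submodule

variable {𝕜 E : Type*} [RCLike 𝕜] [NormedAddCommGroup E] [InnerProductSpace 𝕜 E]
  {U C T Z : Submodule 𝕜 E}

theorem orthogonalFamily_four_of_isOrtho (hZT : Z ≤ T) (hCT : Zᗮ ⊓ C ⟂ Zᗮ ⊓ T) :
    OrthogonalFamily 𝕜 (fun i => ![(C ⊔ T)ᗮ ⊓ U, Zᗮ ⊓ C, Z, Zᗮ ⊓ T] i)
      fun i => (![(C ⊔ T)ᗮ ⊓ U, Zᗮ ⊓ C, Z, Zᗮ ⊓ T] i).subtypeₗᵢ := by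
  have hR : (C ⊔ T)ᗮ ⊓ U ⟂ C ⊔ T := (isOrtho_orthogonal_left _).mono_left inf_le_left
  have hRC₀ : (C ⊔ T)ᗮ ⊓ U ⟂ Zᗮ ⊓ C := hR.mono_right (inf_le_right.trans le_sup_left)
  have hRZ : (C ⊔ T)ᗮ ⊓ U ⟂ Z := hR.mono_right (hZT.trans le_sup_right)
  have hRT₀ : (C ⊔ T)ᗮ ⊓ U ⟂ Zᗮ ⊓ T := hR.mono_right (inf_le_right.trans le_sup_right)
  have hZC₀ : Z ⟂ Zᗮ ⊓ C := (isOrtho_orthogonal_right Z).mono_right inf_le_left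
  have hZT₀ : Z ⟂ Zᗮ ⊓ T := (isOrtho_orthogonal_right Z).mono_right inf_le_left
  refine OrthogonalFamily.of_pairwise fun i j hij => ?_
  fin_cases i <;> fin_cases j <;> first
    | exact absurd rfl hij
    | assumption
    | exact IsOrtho.symm ‹_›

theorem iSup_four_eq_of_le [Z.HasOrthogonalProjection] [(C ⊔ T).HasOrthogonalProjection]
    (hZT : Z ≤ T) (hZC : Z ≤ C) (hCU : C ≤ U) (hTU : T ≤ U) :
    ⨆ i, ![(C ⊔ T)ᗮ ⊓ U, Zᗮ ⊓ C, Z, Zᗮ ⊓ T] i = U := by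
  have hC : Z ⊔ Zᗮ ⊓ C = C := sup_orthogonal_inf_of_hasOrthogonalProjection hZC
  have hT : Z ⊔ Zᗮ ⊓ T = T := sup_orthogonal_inf_of_hasOrthogonalProjection hZT
  have hU : C ⊔ T ⊔ (C ⊔ T)ᗮ ⊓ U = U :=
    sup_orthogonal_inf_of_hasOrthogonalProjection (sup_le hCU hTU)
  refine le_antisymm (iSup_le fun i => ?_) ?_
  · fin_cases i
    exacts [inf_le_right, inf_le_right.trans hCU, hZC.trans hCU, inf_le_right.trans hTU]
  · have h := fun i => le_iSup (fun i => ![(C ⊔ T)ᗮ ⊓ U, Zᗮ ⊓ C, Z, Zᗮ ⊓ T] i) i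
    calc U = (Z ⊔ Zᗮ ⊓ C) ⊔ (Z ⊔ Zᗮ ⊓ T) ⊔ (C ⊔ T)ᗮ ⊓ U := by rw [hC, hT, hU]
      _ ≤ _ := sup_le (sup_le (sup_le (h 2) (h 1)) (sup_le (h 2) (h 3))) (h 0)

end Submodule

section UnitaryAlgebra

variable {d : ℕ} {x y : Matrix (Fin d) (Fin d) ℂ}
  {V W 𝔱 : Submodule ℝ (Matrix (Fin d) (Fin d) ℂ)}

theorem mem_unitaryAlgebra : x ∈ unitaryAlgebra d ↔ xᴴ = -x := Iff.rfl

theorem traceOrthCompl_le : traceOrthCompl V W ≤ W := fun _ hx => hx.1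

theorem centerOf_le : centerOf 𝔱 ≤ 𝔱 := fun _ hx => hx.1

theorem commutantIn_le_unitaryAlgebra : commutantIn d 𝔱 ≤ unitaryAlgebra d := fun _ hx => hx.1

theorem centerOf_le_commutantIn (h𝔱 : 𝔱 ≤ unitaryAlgebra d) : centerOf 𝔱 ≤ commutantIn d 𝔱 :=
  fun _ hx => ⟨h𝔱 hx.1, hx.2⟩

theorem trace_conjTranspose_mul_eq_real_inner (hx : x ∈ unitaryAlgebra d)
    (hy : y ∈ unitaryAlgebra d) : (xᴴ * y).trace = (inner ℝ x y : ℂ) := by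
  have hreal : starRingEnd ℂ (xᴴ * y).trace = (xᴴ * y).trace := by
    rw [← Complex.star_def, ← trace_conjTranspose, conjTranspose_mul, conjTranspose_conjTranspose,
      hx, hy, neg_mul, neg_mul, trace_neg, trace_neg, trace_mul_comm]
  exact Complex.ext rfl (by simpa using Complex.conj_eq_iff_im.1 hreal)

theorem trace_conjTranspose_mul_eq_zero_iff (hx : x ∈ unitaryAlgebra d)
    (hy : y ∈ unitaryAlgebra d) : (xᴴ * y).trace = 0 ↔ inner ℝ x y = 0 := by
  rw [trace_conjTranspose_mul_eq_real_inner hx hy, Complex.ofReal_eq_zero]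

theorem traceOrthCompl_eq_orthogonal_inf (hV : V ≤ unitaryAlgebra d) (hW : W ≤ unitaryAlgebra d) :
    traceOrthCompl V W = Vᗮ ⊓ W := by
  ext x
  rw [Submodule.mem_inf, Submodule.mem_orthogonal, and_comm]
  exact and_congr_right fun hx => forall₂_congr fun z hz =>
    trace_conjTranspose_mul_eq_zero_iff (hV hz) (hW hx)

theorem commutator_mem_unitaryAlgebra (hx : x ∈ unitaryAlgebra d) (hy : y ∈ unitaryAlgebra d) :
    x * y - y * x ∈ unitaryAlgebra d := by
  rw [mem_unitaryAlgebra, conjTranspose_sub, conjTranspose_mul, conjTranspose_mul, hx, hy]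
  noncomm_ring

theorem commutator_mem_traceOrthCompl (hV : V ≤ unitaryAlgebra d) (hx : ∀ z ∈ V, Commute z x)
    (hxy : x * y - y * x ∈ W) : x * y - y * x ∈ traceOrthCompl V W :=
  ⟨hxy, fun z hz => by rw [hV hz]; exact trace_mul_commutator_eq_zero (hx z hz).neg_left y⟩

theorem commutator_mem_centerOf (hx : x ∈ centerOf 𝔱) (hy : y ∈ centerOf 𝔱) :
    x * y - y * x ∈ centerOf 𝔱 := by
  rw [hx.2 y hy.1, sub_self]
  exact zero_mem _

theorem commutator_mem_commutantIn (hx : x ∈ commutantIn d 𝔱) (hy : y ∈ commutantIn d 𝔱) :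
    x * y - y * x ∈ commutantIn d 𝔱 :=
  ⟨commutator_mem_unitaryAlgebra hx.1 hy.1, fun t ht =>
    (Commute.mul_left (hx.2 t ht) (hy.2 t ht)).sub_left
      (Commute.mul_left (hy.2 t ht) (hx.2 t ht))⟩

theorem commutator_mem_traceOrthCompl_centerOf (h𝔱 : 𝔱 ≤ unitaryAlgebra d)
    (hx : x ∈ 𝔱) (hxy : x * y - y * x ∈ 𝔱) : x * y - y * x ∈ traceOrthCompl (centerOf 𝔱) 𝔱 :=
  commutator_mem_traceOrthCompl (centerOf_le.trans h𝔱) (fun _ hz => hz.2 x hx) hxy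

theorem commutator_mem_traceOrthCompl_centerOf_commutantIn (h𝔱 : 𝔱 ≤ unitaryAlgebra d)
    (hx : x ∈ commutantIn d 𝔱) (hy : y ∈ commutantIn d 𝔱) :
    x * y - y * x ∈ traceOrthCompl (centerOf 𝔱) (commutantIn d 𝔱) :=
  commutator_mem_traceOrthCompl (centerOf_le.trans h𝔱) (fun z hz => (hx.2 z hz.1).symm)
    (commutator_mem_commutantIn hx hy)

theorem commutantIn_isOrtho_of_le_span_commutators {𝔰 : Submodule ℝ (Matrix (Fin d) (Fin d) ℂ)}
    (h𝔰 : 𝔰 ≤ 𝔱) (h𝔱 : 𝔱 ≤ unitaryAlgebra d)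
    (hperfect : 𝔰 ≤ Submodule.span ℝ {m | ∃ x₁ ∈ 𝔰, ∃ x₂ ∈ 𝔰, m = x₁ * x₂ - x₂ * x₁}) :
    commutantIn d 𝔱 ⟂ 𝔰 := by
  have hspan : Submodule.span ℝ {m | ∃ x₁ ∈ 𝔰, ∃ x₂ ∈ 𝔰, m = x₁ * x₂ - x₂ * x₁} ≤
      traceOrthCompl (commutantIn d 𝔱) (unitaryAlgebra d) := by
    refine Submodule.span_le.2 ?_
    rintro _ ⟨x₁, h₁, x₂, h₂, rfl⟩
    exact commutator_mem_traceOrthCompl commutantIn_le_unitaryAlgebra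
      (fun _ hz => hz.2 x₁ (h𝔰 h₁)) (commutator_mem_unitaryAlgebra (h𝔱 (h𝔰 h₁)) (h𝔱 (h𝔰 h₂)))
  rw [traceOrthCompl_eq_orthogonal_inf commutantIn_le_unitaryAlgebra le_rfl] at hspan
  exact (Submodule.isOrtho_iff_le.2 ((hperfect.trans hspan).trans inf_le_left)).symm

end UnitaryAlgebra

theorem unitaryAlgebra_four_subspace_decomposition_general (d : ℕ)
    (𝔱 : Submodule ℝ (Matrix (Fin d) (Fin d) ℂ))
    (h𝔱u : 𝔱 ≤ unitaryAlgebra d)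
    (h𝔱cl : ∀ x ∈ 𝔱, ∀ y ∈ 𝔱, x * y - y * x ∈ 𝔱)
    (𝔷 𝔱₀ u𝔱 u𝔱₀ 𝔯 : Submodule ℝ (Matrix (Fin d) (Fin d) ℂ))
    (h𝔷 : 𝔷 = centerOf 𝔱)
    (h𝔱₀ : 𝔱₀ = traceOrthCompl 𝔷 𝔱)
    (hu𝔱 : u𝔱 = commutantIn d 𝔱)
    (hu𝔱₀ : u𝔱₀ = traceOrthCompl 𝔷 u𝔱)
    (h𝔯 : 𝔯 = traceOrthCompl (u𝔱 ⊔ 𝔱) (unitaryAlgebra d))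
    (hperfect : 𝔱₀ ≤ Submodule.span ℝ
      {m : Matrix (Fin d) (Fin d) ℂ | ∃ x₁ ∈ 𝔱₀, ∃ x₂ ∈ 𝔱₀, m = x₁ * x₂ - x₂ * x₁}) :
    (∀ i j : Fin 4, i ≠ j →
      ∀ x ∈ ![𝔯, u𝔱₀, 𝔷, 𝔱₀] i, ∀ y ∈ ![𝔯, u𝔱₀, 𝔷, 𝔱₀] j, (xᴴ * y).trace = 0) ∧
    iSupIndep ![𝔯, u𝔱₀, 𝔷, 𝔱₀] ∧
    (⨆ i : Fin 4, ![𝔯, u𝔱₀, 𝔷, 𝔱₀] i) = unitaryAlgebra d ∧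
    (∀ x ∈ 𝔷, ∀ y ∈ 𝔷, x * y - y * x ∈ 𝔷) ∧
    (∀ x ∈ 𝔱₀, ∀ y ∈ 𝔱₀, x * y - y * x ∈ 𝔱₀) ∧
    (∀ x ∈ u𝔱₀, ∀ y ∈ u𝔱₀, x * y - y * x ∈ u𝔱₀) := by
  subst h𝔷 hu𝔱
  have h𝔷u : centerOf 𝔱 ≤ unitaryAlgebra d := centerOf_le.trans h𝔱u
  have hu𝔱u : commutantIn d 𝔱 ≤ unitaryAlgebra d := commutantIn_le_unitaryAlgebra
  have e𝔱₀ := h𝔱₀.trans (traceOrthCompl_eq_orthogonal_inf h𝔷u h𝔱u)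
  have eu𝔱₀ := hu𝔱₀.trans (traceOrthCompl_eq_orthogonal_inf h𝔷u hu𝔱u)
  have e𝔯 := h𝔯.trans (traceOrthCompl_eq_orthogonal_inf (sup_le hu𝔱u h𝔱u) le_rfl)
  have hortho : u𝔱₀ ⟂ 𝔱₀ :=
    (commutantIn_isOrtho_of_le_span_commutators (h𝔱₀ ▸ traceOrthCompl_le) h𝔱u hperfect).mono_left
      (hu𝔱₀ ▸ traceOrthCompl_le)
  have hfamily := Submodule.orthogonalFamily_four_of_isOrtho (U := unitaryAlgebra d) centerOf_le
    (eu𝔱₀ ▸ e𝔱₀ ▸ hortho)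
  have hsup := Submodule.iSup_four_eq_of_le centerOf_le (centerOf_le_commutantIn h𝔱u) hu𝔱u h𝔱u
  rw [← e𝔯, ← e𝔱₀, ← eu𝔱₀] at hfamily hsup
  refine ⟨fun i j hij x hx y hy => ?_, hfamily.independent, hsup,
    fun _ hx _ hy => commutator_mem_centerOf hx hy,
    h𝔱₀ ▸ fun x hx y hy => commutator_mem_traceOrthCompl_centerOf h𝔱u hx.1 (h𝔱cl x hx.1 y hy.1),
    hu𝔱₀ ▸ fun x hx y hy => commutator_mem_traceOrthCompl_centerOf_commutantIn h𝔱u hx.1 hy.1⟩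
  have hle := fun k => hsup ▸ le_iSup (fun k => ![𝔯, u𝔱₀, centerOf 𝔱, 𝔱₀] k) k
  exact (trace_conjTranspose_mul_eq_zero_iff (hle i hx) (hle j hy)).2
    (Submodule.isOrtho_iff_inner_eq.1 (hfamily.isOrtho hij) x hx y hy)

/-- Four-subspace decomposition of the unitary algebra `𝔲(d)` with
respect to a real Lie subalgebra `𝔱` of skew-Hermitian matrices whose centerless part
`𝔱₀` is perfect: the subspaces `𝔯`, `𝔲^𝔱₀`, `𝔷(𝔱)`, `𝔱₀` are pairwise
trace-orthogonal, `𝔲(d)` is their internal direct sum, and each of `𝔷(𝔱)`, `𝔱₀`,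
`𝔲^𝔱₀` is closed under the commutator. -/
theorem unitaryAlgebra_four_subspace_decomposition (d : ℕ) (hd : 1 ≤ d)
    (𝔱 : Submodule ℝ (Matrix (Fin d) (Fin d) ℂ))
    (h𝔱u : 𝔱 ≤ unitaryAlgebra d)
    (h𝔱cl : ∀ x ∈ 𝔱, ∀ y ∈ 𝔱, x * y - y * x ∈ 𝔱)
    (𝔷 𝔱₀ u𝔱 u𝔱₀ 𝔯 : Submodule ℝ (Matrix (Fin d) (Fin d) ℂ))
    (h𝔷 : 𝔷 = centerOf 𝔱)
    (h𝔱₀ : 𝔱₀ = traceOrthCompl 𝔷 𝔱)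
    (hu𝔱 : u𝔱 = commutantIn d 𝔱)
    (hu𝔱₀ : u𝔱₀ = traceOrthCompl 𝔷 u𝔱)
    (h𝔯 : 𝔯 = traceOrthCompl (u𝔱 ⊔ 𝔱) (unitaryAlgebra d))
    (hperfect : 𝔱₀ ≤ Submodule.span ℝ
      {m : Matrix (Fin d) (Fin d) ℂ | ∃ x₁ ∈ 𝔱₀, ∃ x₂ ∈ 𝔱₀, m = x₁ * x₂ - x₂ * x₁}) :
    (∀ i j : Fin 4, i ≠ j →
      ∀ x ∈ ![𝔯, u𝔱₀, 𝔷, 𝔱₀] i, ∀ y ∈ ![𝔯, u𝔱₀, 𝔷, 𝔱₀] j, (xᴴ * y).trace = 0) ∧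
    iSupIndep ![𝔯, u𝔱₀, 𝔷, 𝔱₀] ∧
    (⨆ i : Fin 4, ![𝔯, u𝔱₀, 𝔷, 𝔱₀] i) = unitaryAlgebra d ∧
    (∀ x ∈ 𝔷, ∀ y ∈ 𝔷, x * y - y * x ∈ 𝔷) ∧
    (∀ x ∈ 𝔱₀, ∀ y ∈ 𝔱₀, x * y - y * x ∈ 𝔱₀) ∧
    (∀ x ∈ u𝔱₀, ∀ y ∈ u𝔱₀, x * y - y * x ∈ u𝔱₀) :=
  unitaryAlgebra_four_subspace_decomposition_general d 𝔱 h𝔱u h𝔱cl 𝔷 𝔱₀ u𝔱 u𝔱₀ 𝔯 h𝔷 h𝔱₀ hu𝔱 hu𝔱₀ h𝔯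
    hperfect

end
end

section
/- The normalized imaginary-time evolved state satisfies the nonlinear imaginary-time Schrödinger equation: let M be a Hermitian complex d×d matrix and ψ₀ ∈ ℂ^d with ψ₀ ≠ 0. Define ψ(t) = ‖exp(-t • M) ψ₀‖⁻¹ • (exp(-t • M) ψ₀) (well-defined since exp(-t • M) is invertible). Then ψ is differentiable and ψ'(t) = -(M (ψ(t))) + Re⟪ψ(t), M ψ(t)⟫ • ψ(t), i.e., dψ/dt + (M - ⟨M⟩(t)) ψ = 0 with ⟨M⟩(t) = Re⟪ψ(t), M ψ(t)⟫. -/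
open Matrix

/-- Interpret a tuple `Fin d → ℂ` as a vector in `ℂ^d = EuclideanSpace ℂ (Fin d)`. -/
def toEuc (d : ℕ) : (Fin d → ℂ) → EuclideanSpace ℂ (Fin d) := fun x => WithLp.toLp 2 x

/-!
The unnormalized state `φ t = exp (-t • M) ψ₀` solves the linear equation `φ' = -M φ` and never
vanishes, because `exp (-t • M)` is invertible. Differentiating `ψ = ‖φ‖⁻¹ • φ` with
`‖φ‖' = Re ⟪φ, φ'⟫ / ‖φ‖` then gives `ψ' = -M ψ + Re ⟪ψ, M ψ⟫ • ψ`.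
-/

open NormedSpace RCLike
open scoped InnerProductSpace

section Normalize

variable {𝕜 E : Type*} [RCLike 𝕜] [NormedAddCommGroup E] [InnerProductSpace 𝕜 E]
  [NormedSpace ℝ E] {φ : ℝ → E} {φ' : E} {t : ℝ}

theorem HasDerivAt.norm (hφ : HasDerivAt φ φ' t) (h0 : φ t ≠ 0) :
    HasDerivAt (fun s => ‖φ s‖) (re ⟪φ t, φ'⟫_𝕜 / ‖φ t‖) t := by
  have hsq : HasDerivAt (fun s => re ⟪φ s, φ s⟫_𝕜)
      (re (⟪φ t, φ'⟫_𝕜 + ⟪φ', φ t⟫_𝕜)) t :=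
    (reCLM (K := 𝕜)).hasFDerivAt.comp_hasDerivAt t (hφ.inner 𝕜 hφ)
  have hpos : re ⟪φ t, φ t⟫_𝕜 ≠ 0 := by
    rw [inner_self_eq_norm_sq]; positivity
  convert hsq.sqrt hpos using 1
  · funext s; rw [inner_self_eq_norm_sq, Real.sqrt_sq (norm_nonneg _)]
  · rw [inner_self_eq_norm_sq, Real.sqrt_sq (norm_nonneg _), map_add, ← inner_conj_symm φ',
      conj_re]
    ring

theorem HasDerivAt.inv_norm_smul (hφ : HasDerivAt φ φ' t) (h0 : φ t ≠ 0) :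
    HasDerivAt (fun s => ‖φ s‖⁻¹ • φ s)
      (‖φ t‖⁻¹ • φ' - (re ⟪φ t, φ'⟫_𝕜 / ‖φ t‖ ^ 3) • φ t) t := by
  refine (((hφ.norm (𝕜 := 𝕜) h0).inv (norm_ne_zero_iff.2 h0)).smul hφ).congr_deriv ?_
  rw [sub_eq_add_neg, ← neg_smul]
  congr 2
  field_simp

variable [IsScalarTower ℝ 𝕜 E]

theorem HasDerivAt.inv_norm_smul_of_neg_apply (T : E →ₗ[𝕜] E) (hφ : HasDerivAt φ (-T (φ t)) t)
    (h0 : φ t ≠ 0) :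
    HasDerivAt (fun s => ‖φ s‖⁻¹ • φ s)
      (-T (‖φ t‖⁻¹ • φ t) + re ⟪‖φ t‖⁻¹ • φ t, T (‖φ t‖⁻¹ • φ t)⟫_𝕜 • (‖φ t‖⁻¹ • φ t))
      t := by
  refine (hφ.inv_norm_smul (𝕜 := 𝕜) h0).congr_deriv ?_
  set c := ‖φ t‖⁻¹
  have hre : re ⟪c • φ t, T (c • φ t)⟫_𝕜 = c * c * re ⟪φ t, T (φ t)⟫_𝕜 := by
    rw [LinearMap.map_smul_of_tower, real_smul_eq_coe_smul (K := 𝕜),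
      real_smul_eq_coe_smul (K := 𝕜) c (T _), inner_smul_real_left, inner_smul_real_right,
      smul_re, smul_re, mul_assoc]
  rw [hre, LinearMap.map_smul_of_tower, inner_neg_right, map_neg, smul_smul, smul_neg, neg_div,
    neg_smul, sub_neg_eq_add]
  congr 2
  ring

end Normalize

section MatrixExp

variable {𝕜 n : Type*} [RCLike 𝕜] [Fintype n] [DecidableEq n]

theorem toEuclideanLin_exp_apply_ne_zero (A : Matrix n n 𝕜) {v : EuclideanSpace 𝕜 n}
    (hv : v ≠ 0) : toEuclideanLin (exp A) v ≠ 0 := by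
  intro h
  apply hv
  apply WithLp.ofLp_injective
  apply mulVec_injective_of_isUnit (isUnit_exp A)
  simpa using congrArg WithLp.ofLp h

-- The matrix norm is only a device of the proof: the statements below involve vectors alone.
attribute [local instance] Matrix.linftyOpNormedRing Matrix.linftyOpNormedAlgebra

theorem hasDerivAt_toEuclideanLin_exp_smul_apply (A : Matrix n n 𝕜) (v : EuclideanSpace 𝕜 n)
    (t : ℝ) :
    HasDerivAt (fun s : ℝ => toEuclideanLin (exp (s • A)) v)
      (toEuclideanLin A (toEuclideanLin (exp (t • A)) v)) t := by
  let L : Matrix n n 𝕜 →L[𝕜] EuclideanSpace 𝕜 n :=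
    LinearMap.toContinuousLinearMap (LinearMap.applyₗ v ∘ₗ toEuclideanLin.toLinearMap)
  refine ((L.restrictScalars ℝ).hasFDerivAt.comp_hasDerivAt t
    (hasDerivAt_exp_smul_const' A t)).congr_deriv ?_
  change toEuclideanLin (A * exp (t • A)) v = _
  apply WithLp.ofLp_injective
  simp [mulVec_mulVec]

end MatrixExp

theorem imaginaryTime_schrodinger_general (d : ℕ)
    (M : Matrix (Fin d) (Fin d) ℂ)
    (ψ₀ : EuclideanSpace ℂ (Fin d)) (hψ₀ : ψ₀ ≠ 0)
    (ψ : ℝ → EuclideanSpace ℂ (Fin d))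
    (hψ : ∀ t : ℝ, ψ t =
      ‖toEuc d ((NormedSpace.exp (-t • M)).mulVec ψ₀)‖⁻¹ •
        toEuc d ((NormedSpace.exp (-t • M)).mulVec ψ₀))
    (t : ℝ) :
    HasDerivAt ψ
      (-(toEuc d (M.mulVec (ψ t))) +
        (inner ℂ (ψ t) (toEuc d (M.mulVec (ψ t))) : ℂ).re • ψ t) t := by
  set φ : ℝ → EuclideanSpace ℂ (Fin d) := fun s => toEuclideanLin (exp (s • -M)) ψ₀
  have hψφ : ψ = fun s => ‖φ s‖⁻¹ • φ s := by
    funext s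
    rw [hψ s, neg_smul, ← smul_neg]
    rfl
  have hφ : HasDerivAt φ (-toEuclideanLin M (φ t)) t := by
    refine (hasDerivAt_toEuclideanLin_exp_smul_apply (-M) ψ₀ t).congr_deriv ?_
    rw [map_neg, LinearMap.neg_apply]
  subst hψφ
  exact hφ.inv_norm_smul_of_neg_apply _ (toEuclideanLin_exp_apply_ne_zero _ hψ₀)

/-- The normalized imaginary-time evolved state
`ψ(t) = ‖exp (-t • M) ψ₀‖⁻¹ • exp (-t • M) ψ₀` satisfies the nonlinear imaginary-time
Schrödinger equation `ψ'(t) = -(M ψ(t)) + ⟨M⟩(t) • ψ(t)` with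
`⟨M⟩(t) = Re ⟪ψ(t), M ψ(t)⟫`. -/
theorem imaginaryTime_schrodinger (d : ℕ) (hd : 1 ≤ d)
    (M : Matrix (Fin d) (Fin d) ℂ) (hM : Mᴴ = M)
    (ψ₀ : EuclideanSpace ℂ (Fin d)) (hψ₀ : ψ₀ ≠ 0)
    (ψ : ℝ → EuclideanSpace ℂ (Fin d))
    (hψ : ∀ t : ℝ, ψ t =
      ‖toEuc d ((NormedSpace.exp (-t • M)).mulVec ψ₀)‖⁻¹ •
        toEuc d ((NormedSpace.exp (-t • M)).mulVec ψ₀))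
    (t : ℝ) :
    HasDerivAt ψ
      (-(toEuc d (M.mulVec (ψ t))) +
        (inner ℂ (ψ t) (toEuc d (M.mulVec (ψ t))) : ℂ).re • ψ t) t :=
  imaginaryTime_schrodinger_general d M ψ₀ hψ₀ ψ hψ t
end
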